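/- Let G be a countably infinite Abelian group and u a TB-sequence in G such that s_u(G_d^) is countable. Then the conjugate j^ : (G, bu)^ → (G, u)^ of the identity map j : (G, u) → (G, bu) is a topological isomorphism; in particular both dual groups, each with its compact-open topology, are discrete and coincide. -/

import Mathlib

open Filter Topology

noncomputable section

/-- The circle group `𝕋 = ℝ/ℤ`. -/
abbrev 𝕋 : Type := AddCircle (1 : ℝ)

/-- The sequence `u` converges to `0` in the topology `τ`. -/
def TendsToZero {G : Type*} [AddCommGroup G] (τ : TopologicalSpace G) (u : ℕ → G) : Prop :=
  Filter.Tendsto u Filter.atTop (@nhds G τ 0)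

/-- `τ` is a Hausdorff group topology on `G` in which every sequence of `S` converges to `0`. -/
def IsTopFor {G : Type*} [AddCommGroup G] (S : Set (ℕ → G)) (τ : TopologicalSpace G) : Prop :=
  @IsTopologicalAddGroup G τ _ ∧ @T2Space G τ ∧ ∀ u ∈ S, TendsToZero τ u

/-- `S` is a `TS`-set of sequences in `G`. -/
def IsTSSet {G : Type*} [AddCommGroup G] (S : Set (ℕ → G)) : Prop :=
  ∃ τ : TopologicalSpace G, IsTopFor S τ

/-- `τ` is the finest Hausdorff group topology on `G` in which every sequence of `S`
converges to `0` (recall that in Mathlib's order on topologies, `≤` means "finer"). -/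
def IsFinestFor {G : Type*} [AddCommGroup G] (S : Set (ℕ → G)) (τ : TopologicalSpace G) : Prop :=
  IsTopFor S τ ∧ ∀ τ' : TopologicalSpace G, IsTopFor S τ' → τ ≤ τ'

/-- The group topology `τ` on `G` is totally bounded (precompact): every neighborhood `U` of `0`
has finitely many translates covering `G`. -/
def IsPrecompactTop {G : Type*} [AddCommGroup G] (τ : TopologicalSpace G) : Prop :=
  ∀ U ∈ @nhds G τ 0, ∃ F : Finset G, ∀ g : G, ∃ f ∈ F, g - f ∈ U

/-- `τ` is a totally bounded Hausdorff group topology on `G` in which every sequence of `S`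
converges to `0`. -/
def IsPTopFor {G : Type*} [AddCommGroup G] (S : Set (ℕ → G)) (τ : TopologicalSpace G) : Prop :=
  IsTopFor S τ ∧ IsPrecompactTop τ

/-- `S` is a `TBS`-set of sequences in `G`. -/
def IsTBSSet {G : Type*} [AddCommGroup G] (S : Set (ℕ → G)) : Prop :=
  ∃ τ : TopologicalSpace G, IsPTopFor S τ

/-- `τ` is the finest totally bounded Hausdorff group topology on `G` in which every sequence
of `S` converges to `0`. -/
def IsFinestPFor {G : Type*} [AddCommGroup G] (S : Set (ℕ → G)) (τ : TopologicalSpace G) : Prop :=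
  IsPTopFor S τ ∧ ∀ τ' : TopologicalSpace G, IsPTopFor S τ' → τ ≤ τ'

/-- `s_S(G_d^∧)`: the characters `χ` of the discrete group `G` with `χ(u_n) → 0` for all
`u ∈ S`. -/
def sS {G : Type*} [AddCommGroup G] (S : Set (ℕ → G)) : Set (G →+ 𝕋) :=
  {χ | ∀ u ∈ S, Filter.Tendsto (fun n => χ (u n)) Filter.atTop (nhds (0 : 𝕋))}

/-- `T_H`: the coarsest (initial) topology on `G` making every character of `H` continuous. -/
def TH {G : Type*} [AddCommGroup G] (H : Set (G →+ 𝕋)) : TopologicalSpace G :=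
  ⨅ χ ∈ H, TopologicalSpace.induced (χ : G → 𝕋) inferInstance

/-- `(G, τ)` is maximally almost periodic: continuous characters separate points. -/
def IsMAP {G : Type*} [AddCommGroup G] (τ : TopologicalSpace G) : Prop :=
  ∀ g : G, g ≠ 0 → ∃ χ : G →+ 𝕋, @Continuous G 𝕋 τ _ χ ∧ χ g ≠ 0

/-- The dual group of `(G, τ)`: the subgroup of the character group of `G_d` consisting of
`τ`-continuous characters. -/
def dual {G : Type*} [AddCommGroup G] (τ : TopologicalSpace G) : AddSubgroup (G →+ 𝕋) where
  carrier := {χ : G →+ 𝕋 | @Continuous G 𝕋 τ _ χ}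
  zero_mem' := by
    letI := τ
    show Continuous fun _ : G => (0 : 𝕋)
    exact continuous_const
  add_mem' := by
    intro a b ha hb
    letI := τ
    show Continuous fun g : G => a g + b g
    exact Continuous.add ha hb
  neg_mem' := by
    intro a ha
    letI := τ
    show Continuous fun g : G => -(a g)
    exact Continuous.neg ha

/-- The compact-open topology on the dual group of `(G, τ)`. -/
def coTop {G : Type*} [AddCommGroup G] (τ : TopologicalSpace G) :
    TopologicalSpace ↥(dual τ) :=
  TopologicalSpace.generateFrom
    {T | ∃ (K : Set G) (U : Set 𝕋), @IsCompact G τ K ∧ IsOpen U ∧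
          T = {χ : ↥(dual τ) | ∀ g ∈ K, (χ : G →+ 𝕋) g ∈ U}}

/-- Evaluation at `g ∈ G`, as a character of the dual group of `(G, τ)`; this is the value of the
canonical map `G → bG` at `g`. -/
def evalHom {G : Type*} [AddCommGroup G] (τ : TopologicalSpace G) (g : G) :
    ↥(dual τ) →+ 𝕋 where
  toFun χ := (χ : G →+ 𝕋) g
  map_zero' := rfl
  map_add' _ _ := rfl

/-- The natural (compact-open = pointwise) topology on the character group `A_d^∧` of a
discrete abelian group `A`. -/
def Xtop (A : Type*) [AddCommGroup A] : TopologicalSpace (A →+ 𝕋) :=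
  TopologicalSpace.induced (fun χ : A →+ 𝕋 => (χ : A → 𝕋)) Pi.topologicalSpace

/-- For a sequence `u` of characters of `X`, `su u = s_u(X) = {x | u_n(x) → 0}`. -/
def su {X : Type*} [AddCommGroup X] (u : ℕ → (X →+ 𝕋)) : Set X :=
  {x | Filter.Tendsto (fun n => u n x) Filter.atTop (nhds (0 : 𝕋))}

/-- The `g`-closure of a subset `H` of the abelian topological group `(X, τ)`: the intersection
of all `s_u(X)` over sequences `u` of continuous characters of `(X, τ)` with `H ⊆ s_u(X)`. -/
def gClosure {X : Type*} [AddCommGroup X] (τ : TopologicalSpace X) (H : Set X) : Set X :=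
  ⋂ u ∈ {u : ℕ → (X →+ 𝕋) | (∀ n, @Continuous X 𝕋 τ _ (u n)) ∧ H ⊆ su u}, su u

/-- `H` is a `g`-closed subset of `(X, τ)`. -/
def IsGClosed {X : Type*} [AddCommGroup X] (τ : TopologicalSpace X) (H : Set X) : Prop :=
  gClosure τ H = H

/-- The weight of a topology: the least cardinality of a topological basis. -/
def topWeight {X : Type*} (τ : TopologicalSpace X) : Cardinal :=
  ⨅ B ∈ {B : Set (Set X) | @TopologicalSpace.IsTopologicalBasis X τ B}, Cardinal.mk B

/-- The group uniformity of the group topology `τ` on `G`. -/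
def uniformOf {G : Type*} [AddCommGroup G] (τ : TopologicalSpace G)
    (h : @IsTopologicalAddGroup G τ _) : UniformSpace G :=
  letI := τ; haveI := h; IsTopologicalAddGroup.rightUniformSpace G

end

lemma torus_norm_le_half (x : 𝕋) : ‖x‖ ≤ 1/2 := by
  induction x using QuotientAddGroup.induction_on with
  | H r =>
    rw [show ((r : 𝕋) = (r : AddCircle (1:ℝ))) from rfl, AddCircle.norm_eq]
    simpa using abs_sub_round r

lemma torus_norm_coe_ge {s : ℝ} (h1 : 1/3 ≤ s) (h2 : s ≤ 2/3) : 1/3 ≤ ‖(s : 𝕋)‖ := by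
  rw [AddCircle.norm_eq]
  simp only [inv_one, one_mul, mul_one]
  rcases le_or_gt ((round s : ℝ)) 0 with h | h
  · rw [abs_of_nonneg (by linarith)]; linarith
  · have h1' : (1:ℝ) ≤ (round s : ℝ) := by exact_mod_cast h
    rw [abs_of_nonpos (by linarith)]; linarith

lemma exists_mul_mem {s : ℝ} (h0 : 0 < s) (h3 : s < 1/3) :
    ∃ k : ℕ, 1/3 ≤ (k:ℝ) * s ∧ (k:ℝ) * s ≤ 2/3 := by
  refine ⟨⌈(1/3) / s⌉₊, ?_, ?_⟩
  · have := Nat.le_ceil ((1/3) / s)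
    calc (1:ℝ)/3 = ((1/3)/s) * s := by field_simp
    _ ≤ (⌈(1/3)/s⌉₊ : ℝ) * s := by gcongr
  · have h := Nat.ceil_lt_add_one (R := ℝ) (by positivity : (0:ℝ) ≤ (1/3)/s)
    have : (⌈(1/3)/s⌉₊ : ℝ) * s < ((1/3)/s + 1) * s := by gcongr
    have heq : ((1/3)/s + 1) * s = 1/3 + s := by field_simp
    nlinarith

lemma torus_exists_nsmul_ge (x : 𝕋) (hx : x ≠ 0) : ∃ k : ℕ, 1/3 ≤ ‖k • x‖ := by
  induction x using QuotientAddGroup.induction_on with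
  | H r =>
    -- replace r by its fractional part
    have hfl : (((⌊r⌋ : ℝ)) : 𝕋) = 0 := by
      rw [AddCircle.coe_eq_zero_iff]
      exact ⟨⌊r⌋, by rw [zsmul_eq_mul, mul_one]⟩
    have hfr : ((Int.fract r : ℝ) : 𝕋) = (r : 𝕋) := by
      conv_rhs => rw [← Int.fract_add_floor r]
      rw [AddCircle.coe_add, hfl, add_zero]
    rw [← hfr] at hx ⊢
    set s := Int.fract r with hs
    have hs0 : 0 ≤ s := Int.fract_nonneg r
    have hs1 : s < 1 := Int.fract_lt_one r
    have hsne : s ≠ 0 := by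
      intro h; apply hx; rw [h]; norm_cast
    have hspos : 0 < s := lt_of_le_of_ne hs0 (Ne.symm hsne)
    have key : ∀ t : ℝ, 0 < t → t < 1/3 → ∃ k : ℕ, 1/3 ≤ ‖((k * t : ℝ) : 𝕋)‖ := by
      intro t ht0 ht3
      obtain ⟨k, hk1, hk2⟩ := exists_mul_mem ht0 ht3
      exact ⟨k, torus_norm_coe_ge hk1 hk2⟩
    have hsm : ∀ k : ℕ, k • ((s:ℝ) : 𝕋) = (((k:ℝ) * s : ℝ) : 𝕋) := by
      intro k
      rw [← AddCircle.coe_nsmul]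
      norm_cast
      rw [nsmul_eq_mul]
    rcases lt_or_ge s (1/3) with h | h
    · obtain ⟨k, hk⟩ := key s hspos h
      exact ⟨k, by rw [hsm k]; exact hk⟩
    rcases le_or_gt s (2/3) with h2 | h2
    · exact ⟨1, by rw [one_smul]; exact torus_norm_coe_ge h h2⟩
    · -- s > 2/3 : use 1 - s
      have h1s0 : 0 < 1 - s := by linarith
      have h1s3 : 1 - s < 1/3 := by linarith
      obtain ⟨k, hk⟩ := key (1-s) h1s0 h1s3
      refine ⟨k, ?_⟩
      rw [hsm k]
      have : (((k:ℝ) * s : ℝ) : 𝕋) = -(((k:ℝ) * (1 - s) : ℝ) : 𝕋) := by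
        rw [eq_neg_iff_add_eq_zero, ← AddCircle.coe_add]
        have : (k:ℝ) * s + (k:ℝ) * (1 - s) = (k:ℤ) • (1:ℝ) := by rw [zsmul_eq_mul, mul_one]; push_cast; ring
        rw [this, AddCircle.coe_eq_zero_iff]
        exact ⟨k, by rw [zsmul_eq_mul, mul_one]⟩
      rw [this, norm_neg]
      exact hk

section Construction

variable {G : Type*} [AddCommGroup G]

lemma mem_sS_iff {u : ℕ → G} {χ : G →+ 𝕋} :
    χ ∈ sS {u} ↔ Filter.Tendsto (fun n => χ (u n)) Filter.atTop (nhds (0 : 𝕋)) := by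
  simp [sS]

lemma exists_big_witness {ψ : G →+ 𝕋} (h : ψ ≠ 0) : ∃ w : G, 1/3 ≤ ‖ψ w‖ := by
  have hg : ∃ g, ψ g ≠ 0 := by
    by_contra h'
    push_neg at h'
    exact h (AddMonoidHom.ext fun g => h' g)
  obtain ⟨g, hg⟩ := hg
  obtain ⟨k, hk⟩ := torus_exists_nsmul_ge _ hg
  exact ⟨k • g, by rwa [map_nsmul]⟩

lemma uncountable_sS_of_small_chars [Countable G]
    (τ : TopologicalSpace G) (u : ℕ → G) (hu : TendsToZero τ u)
    (H : ∀ K : Set G, @IsCompact G τ K → ∀ n : ℕ, ∃ ψ : G →+ 𝕋,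
        ψ ∈ sS {u} ∧ ψ ≠ 0 ∧ ∀ g ∈ K, ‖ψ g‖ ≤ (1/2 : ℝ)^(n+4)) :
    ¬ (sS {u}).Countable := by
  intro hc
  classical
  letI := τ
  obtain ⟨f, hf⟩ := exists_surjective_nat G
  -- the choice functions
  let pick : Set G → ℕ → (G →+ 𝕋) := fun K n =>
    if h : IsCompact K then (H K h n).choose else 0
  have hpick : ∀ K, ∀ hK : IsCompact K, ∀ n, pick K n ∈ sS {u} ∧ pick K n ≠ 0 ∧
      ∀ g ∈ K, ‖pick K n g‖ ≤ (1/2 : ℝ)^(n+4) := by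
    intro K hK n
    simp only [pick, dif_pos hK]
    exact (H K hK n).choose_spec
  let wit : (G →+ 𝕋) → G := fun ψ =>
    if h : ∃ w, 1/3 ≤ ‖ψ w‖ then h.choose else 0
  have hwit : ∀ ψ : G →+ 𝕋, ψ ≠ 0 → 1/3 ≤ ‖ψ (wit ψ)‖ := by
    intro ψ hψ
    have h := exists_big_witness hψ
    simp only [wit, dif_pos h]
    exact h.choose_spec
  -- the recursive sequence of compact sets
  let K : ℕ → Set G := fun n =>
    Nat.rec (insert 0 (Set.range u) ∪ {f 0})
      (fun m Km => Km ∪ {f (m+1), wit (pick Km m)}) n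
  let ψ : ℕ → (G →+ 𝕋) := fun n => pick (K n) n
  let w : ℕ → G := fun n => wit (ψ n)
  have hKsucc : ∀ n, K (n+1) = K n ∪ {f (n+1), w n} := fun n => rfl
  have hKc : ∀ n, IsCompact (K n) := by
    intro n
    induction n with
    | zero =>
      exact (hu.isCompact_insert_range).union (Set.finite_singleton _).isCompact
    | succ n ih =>
      rw [hKsucc]
      exact ih.union (((Set.finite_singleton _).insert _).isCompact)
  have hKmono : Monotone K := monotone_nat_of_le_succ fun n => by
    rw [hKsucc]; exact Set.subset_union_left
  have hspec : ∀ n, ψ n ∈ sS {u} ∧ ψ n ≠ 0 ∧ ∀ g ∈ K n, ‖ψ n g‖ ≤ (1/2 : ℝ)^(n+4) :=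
    fun n => hpick (K n) (hKc n) n
  have hψs : ∀ n, Filter.Tendsto (fun m => ψ n (u m)) Filter.atTop (nhds (0:𝕋)) :=
    fun n => mem_sS_iff.mp (hspec n).1
  have hψsmall : ∀ n, ∀ g ∈ K n, ‖ψ n g‖ ≤ (1/2 : ℝ)^(n+4) := fun n => (hspec n).2.2
  have hw : ∀ n, 1/3 ≤ ‖ψ n (w n)‖ := fun n => hwit _ (hspec n).2.1
  have hwK : ∀ n, w n ∈ K (n+1) := by
    intro n; rw [hKsucc]; right; right; rfl
  have huK : ∀ n m, u m ∈ K n := by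
    intro n m
    refine hKmono (Nat.zero_le n) ?_
    exact Set.mem_union_left _ (Set.mem_insert_of_mem _ (Set.mem_range_self m))
  have hfK : ∀ m n, m ≤ n → f m ∈ K n := by
    intro m n hmn
    refine hKmono hmn ?_
    cases m with
    | zero => exact Set.mem_union_right _ rfl
    | succ m => rw [hKsucc]; right; left; rfl
  -- partial sums
  set Φ : (ℕ → Bool) → ℕ → G → 𝕋 := fun σ N g =>
    ∑ n ∈ Finset.range N, (if σ n then ψ n g else 0) with hΦ
  have hΦsucc : ∀ σ N g, Φ σ (N+1) g = Φ σ N g + (if σ N then ψ N g else 0) := by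
    intro σ N g
    simp only [hΦ, Finset.sum_range_succ]
  have hterm_le : ∀ (b : Bool) (x : 𝕋), ‖(if b then x else 0)‖ ≤ ‖x‖ := by
    intro b x; cases b <;> simp
  have hdist : ∀ σ N g, dist (Φ σ N g) (Φ σ (N+1) g) ≤ ‖ψ N g‖ := by
    intro σ N g
    rw [dist_eq_norm, hΦsucc, ← sub_sub, sub_self, zero_sub, norm_neg]
    exact hterm_le _ _
  have hcauchy : ∀ σ g, CauchySeq (fun N => Φ σ N g) := by
    intro σ g
    obtain ⟨m, rfl⟩ := hf g
    apply cauchySeq_of_le_geometric (1/2) ((2:ℝ)^(m+5)) (by norm_num)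
    intro N
    refine le_trans (hdist σ N (f m)) ?_
    rcases le_or_gt m N with h | h
    · refine le_trans (hψsmall N (f m) (hfK m N h)) ?_
      have h1 : ((1:ℝ)/2)^(N+4) = (1/2)^4 * (1/2)^N := by ring
      rw [h1]
      have : ((1:ℝ)/2)^4 ≤ (2:ℝ)^(m+5) := by
        calc ((1:ℝ)/2)^4 ≤ 1 := by norm_num
        _ ≤ (2:ℝ)^(m+5) := one_le_pow₀ (by norm_num)
      have hp : (0:ℝ) < (1/2)^N := by positivity
      nlinarith
    · refine le_trans (torus_norm_le_half _) ?_
      have h1 : ((1:ℝ)/2)^N ≥ (1/2)^m :=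
        pow_le_pow_of_le_one (by norm_num) (by norm_num) (le_of_lt h)
      have h2 : ((2:ℝ)^(m+5)) * ((1/2)^m) = 2^5 := by
        rw [pow_add, one_div, inv_pow]
        field_simp
      have hp : (0:ℝ) < (2:ℝ)^(m+5) := by positivity
      nlinarith
  choose L hL using fun σ g => cauchySeq_tendsto_of_complete (hcauchy σ g)
  have hΦadd : ∀ σ N a b, Φ σ N (a + b) = Φ σ N a + Φ σ N b := by
    intro σ N a b
    simp only [hΦ, ← Finset.sum_add_distrib]
    refine Finset.sum_congr rfl fun n _ => ?_
    cases hσ : σ n <;> simp [map_add]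
  have hΦzero : ∀ σ N, Φ σ N 0 = 0 := by
    intro σ N
    simp only [hΦ]
    refine Finset.sum_eq_zero fun n _ => ?_
    cases hσ : σ n <;> simp
  let χ : (ℕ → Bool) → G →+ 𝕋 := fun σ =>
    { toFun := L σ
      map_zero' := tendsto_nhds_unique (hL σ 0)
        (by simpa [hΦzero] using (tendsto_const_nhds : Filter.Tendsto (fun _ : ℕ => (0:𝕋)) _ _))
      map_add' := fun a b => tendsto_nhds_unique (hL σ (a+b))
        (by simpa [hΦadd] using ((hL σ a).add (hL σ b))) }
  have htailsum : ∀ σ N M g, N ≤ M → g ∈ K N → ‖Φ σ M g - Φ σ N g‖ ≤ (1/2:ℝ)^(N+3) := by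
    intro σ N M g hNM hg
    have hsub : Φ σ M g - Φ σ N g = ∑ n ∈ Finset.Ico N M, (if σ n then ψ n g else 0) := by
      rw [Finset.sum_Ico_eq_sub _ hNM]
    rw [hsub]
    calc ‖∑ n ∈ Finset.Ico N M, (if σ n then ψ n g else 0)‖
        ≤ ∑ n ∈ Finset.Ico N M, ‖(if σ n then ψ n g else 0)‖ := norm_sum_le _ _
      _ ≤ ∑ n ∈ Finset.Ico N M, (1/2:ℝ)^(n+4) := by
          refine Finset.sum_le_sum fun n hn => ?_
          refine le_trans (hterm_le _ _) ?_
          exact hψsmall n g (hKmono (Finset.mem_Ico.mp hn).1 hg)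
      _ = ∑ j ∈ Finset.range (M - N), (1/2:ℝ)^(N+4) * (1/2)^j := by
          rw [Finset.sum_Ico_eq_sum_range]
          refine Finset.sum_congr rfl fun j _ => ?_
          ring
      _ = (1/2:ℝ)^(N+4) * ∑ j ∈ Finset.range (M - N), (1/2:ℝ)^j := by
          rw [Finset.mul_sum]
      _ ≤ (1/2:ℝ)^(N+4) * 2 := by
          have := sum_geometric_two_le (M - N)
          have hp : (0:ℝ) ≤ (1/2:ℝ)^(N+4) := by positivity
          nlinarith
      _ = (1/2:ℝ)^(N+3) := by ring
  have htail : ∀ σ N g, g ∈ K N → ‖L σ g - Φ σ N g‖ ≤ (1/2:ℝ)^(N+3) := by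
    intro σ N g hg
    refine le_of_tendsto (((hL σ g).sub tendsto_const_nhds).norm) ?_
    filter_upwards [eventually_ge_atTop N] with M hM
    exact htailsum σ N M g hM hg
  have hmem : ∀ σ, χ σ ∈ sS {u} := by
    intro σ
    rw [mem_sS_iff, NormedAddCommGroup.tendsto_nhds_zero]
    intro ε hε
    obtain ⟨N, hN⟩ : ∃ N : ℕ, (1/2:ℝ)^(N+3) < ε/2 := by
      obtain ⟨N, hN⟩ := exists_pow_lt_of_lt_one (half_pos hε) (by norm_num : (1:ℝ)/2 < 1)
      exact ⟨N, lt_of_le_of_lt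
        (pow_le_pow_of_le_one (by norm_num) (by norm_num) (Nat.le_add_right N 3)) hN⟩
    have h2 : Filter.Tendsto (fun m => Φ σ N (u m)) Filter.atTop (nhds (0:𝕋)) := by
      have : Filter.Tendsto (fun m => ∑ n ∈ Finset.range N, (if σ n then ψ n (u m) else 0))
          Filter.atTop (nhds (∑ n ∈ Finset.range N, (0:𝕋))) := by
        refine tendsto_finset_sum _ fun n _ => ?_
        cases hσ : σ n
        · simpa using (tendsto_const_nhds : Filter.Tendsto (fun _ : ℕ => (0:𝕋)) _ _)
        · simpa using hψs n
      simpa using this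
    rw [NormedAddCommGroup.tendsto_nhds_zero] at h2
    filter_upwards [h2 (ε/2) (half_pos hε)] with m hm
    have h1 : ‖L σ (u m) - Φ σ N (u m)‖ ≤ (1/2:ℝ)^(N+3) := htail σ N (u m) (huK N m)
    calc ‖χ σ (u m)‖ = ‖(L σ (u m) - Φ σ N (u m)) + Φ σ N (u m)‖ := by
          simp [χ, sub_add_cancel]
      _ ≤ ‖L σ (u m) - Φ σ N (u m)‖ + ‖Φ σ N (u m)‖ := norm_add_le _ _
      _ < ε/2 + ε/2 := by
          refine add_lt_add_of_le_of_lt (le_trans h1 (le_of_lt hN)) hm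
      _ = ε := by ring
  have hinj : Function.Injective χ := by
    intro σ σ' hEq
    by_contra hne
    have hx : ∃ n, σ n ≠ σ' n := Function.ne_iff.mp hne
    set n₀ := Nat.find hx with hn₀def
    have hn₀ : σ n₀ ≠ σ' n₀ := Nat.find_spec hx
    have hmin : ∀ m, m < n₀ → σ m = σ' m := fun m hm => not_not.mp (Nat.find_min hx hm)
    set v := w n₀ with hvdef
    have hvK : ∀ n, n₀ + 1 ≤ n → v ∈ K n := fun n hn => hKmono hn (hwK n₀)
    have hLeq : L σ v = L σ' v := by
      have := DFunLike.congr_fun hEq v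
      exact this
    -- the difference of partial sums at v tends to 0
    have hD : Filter.Tendsto (fun N => Φ σ N v - Φ σ' N v) Filter.atTop (nhds (0:𝕋)) := by
      have := (hL σ v).sub (hL σ' v)
      rwa [hLeq, sub_self] at this
    -- value at n₀ + 1
    have hDval : ‖Φ σ (n₀+1) v - Φ σ' (n₀+1) v‖ = ‖ψ n₀ v‖ := by
      have hsub : Φ σ (n₀+1) v - Φ σ' (n₀+1) v =
          ∑ n ∈ Finset.range (n₀+1), ((if σ n then ψ n v else 0) - (if σ' n then ψ n v else 0)) := by
        simp only [hΦ, Finset.sum_sub_distrib]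
      rw [hsub, Finset.sum_eq_single n₀]
      · cases hσ1 : σ n₀ <;> cases hσ2 : σ' n₀
        · exact absurd (hσ1.trans hσ2.symm) hn₀
        · simp
        · simp [norm_sub_rev]
        · exact absurd (hσ1.trans hσ2.symm) hn₀
      · intro n hn hne'
        have hlt : n < n₀ := lt_of_le_of_ne (Nat.lt_succ_iff.mp (Finset.mem_range.mp hn)) hne'
        rw [hmin n hlt, sub_self]
      · intro hmem'
        exact absurd (Finset.self_mem_range_succ n₀) (fun h => hmem' h)
    have hDtail : ∀ M, n₀ + 1 ≤ M →
        ‖(Φ σ M v - Φ σ' M v) - (Φ σ (n₀+1) v - Φ σ' (n₀+1) v)‖ ≤ (1/2:ℝ)^(n₀+3) := by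
      intro M hM
      have h1 := htailsum σ (n₀+1) M v hM (hvK _ le_rfl)
      have h2 := htailsum σ' (n₀+1) M v hM (hvK _ le_rfl)
      calc ‖(Φ σ M v - Φ σ' M v) - (Φ σ (n₀+1) v - Φ σ' (n₀+1) v)‖
          = ‖(Φ σ M v - Φ σ (n₀+1) v) - (Φ σ' M v - Φ σ' (n₀+1) v)‖ := by congr 1; abel
        _ ≤ ‖Φ σ M v - Φ σ (n₀+1) v‖ + ‖Φ σ' M v - Φ σ' (n₀+1) v‖ := norm_sub_le _ _
        _ ≤ (1/2:ℝ)^(n₀+1+3) + (1/2:ℝ)^(n₀+1+3) := add_le_add h1 h2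
        _ = (1/2:ℝ)^(n₀+3) := by ring
    have hlim : ‖(0:𝕋) - (Φ σ (n₀+1) v - Φ σ' (n₀+1) v)‖ ≤ (1/2:ℝ)^(n₀+3) := by
      refine le_of_tendsto ((hD.sub tendsto_const_nhds).norm) ?_
      filter_upwards [eventually_ge_atTop (n₀+1)] with M hM
      exact hDtail M hM
    rw [zero_sub, norm_neg, hDval] at hlim
    have h13 : (1:ℝ)/3 ≤ ‖ψ n₀ v‖ := hw n₀
    have h18 : ((1:ℝ)/2)^(n₀+3) ≤ (1/2:ℝ)^3 :=
      pow_le_pow_of_le_one (by norm_num) (by norm_num) (by omega)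
    have : ((1:ℝ)/2)^3 < 1/3 := by norm_num
    linarith
  -- conclude uncountability
  have hcnt : Countable ↥(sS {u} : Set (G →+ 𝕋)) := Set.countable_coe_iff.mpr hc
  have : Countable (ℕ → Bool) := by
    have hinj2 : Function.Injective (fun σ : ℕ → Bool => (⟨χ σ, hmem σ⟩ : ↥(sS {u}))) := by
      intro a b hab
      exact hinj (congrArg Subtype.val hab)
    exact hinj2.countable
  obtain ⟨e, he⟩ := exists_surjective_nat (ℕ → Bool)
  obtain ⟨m, hm⟩ := he (fun n => !(e n n))
  have := congrFun hm m
  simp at this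

end Construction

section Discrete

variable {G : Type*} [AddCommGroup G]

lemma dual_subset_sS {τ : TopologicalSpace G} {u : ℕ → G} (hu : TendsToZero τ u)
    {χ : G →+ 𝕋} (hχ : χ ∈ dual τ) : χ ∈ sS {u} := by
  rw [mem_sS_iff]
  have hc : @Continuous G 𝕋 τ _ χ := hχ
  have h0 := (@Continuous.tendsto G 𝕋 τ _ _ hc 0).comp hu
  simpa [Function.comp_def, map_zero] using h0

lemma twisted_isOpen (τ : TopologicalSpace G) {K : Set G} (hK : @IsCompact G τ K)
    (χ₀ : ↥(dual τ)) {ε : ℝ} (hε : 0 < ε) :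
    IsOpen[coTop τ] {χ : ↥(dual τ) | ∀ g ∈ K, ‖(χ : G →+ 𝕋) g - (χ₀ : G →+ 𝕋) g‖ < ε} := by
  letI := τ
  set V := {χ : ↥(dual τ) | ∀ g ∈ K, ‖(χ : G →+ 𝕋) g - (χ₀ : G →+ 𝕋) g‖ < ε} with hV
  rw [@isOpen_iff_forall_mem_open _ (coTop τ)]
  intro χ hχ
  have hχc : Continuous ((χ : G →+ 𝕋) : G → 𝕋) := χ.2
  have hχ₀c : Continuous ((χ₀ : G →+ 𝕋) : G → 𝕋) := χ₀.2
  set δ : G → ℝ := fun g => (ε - ‖(χ : G →+ 𝕋) g - (χ₀ : G →+ 𝕋) g‖)/4 with hδ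
  set U : G → Set G := fun g =>
    {h | ‖(χ : G →+ 𝕋) h - (χ : G →+ 𝕋) g‖ < δ g ∧ ‖(χ₀ : G →+ 𝕋) h - (χ₀ : G →+ 𝕋) g‖ < δ g}
    with hU
  have hUopen : ∀ g, IsOpen (U g) := by
    intro g
    apply IsOpen.inter
    · exact isOpen_lt ((hχc.sub continuous_const).norm) continuous_const
    · exact isOpen_lt ((hχ₀c.sub continuous_const).norm) continuous_const
  have hcover : K ⊆ ⋃ g : G, U g := by
    intro g hg
    have hδg : 0 < δ g := by
      have := hχ g hg
      simp only [hδ]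
      linarith
    exact Set.mem_iUnion.mpr ⟨g, by simp [hU, hδg]⟩
  obtain ⟨T, hT⟩ := hK.elim_finite_subcover U hUopen hcover
  set T' : Finset G := T.filter (fun g => 0 < δ g) with hT'
  have hcover' : K ⊆ ⋃ g ∈ T', U g := by
    intro h hh
    obtain ⟨g, hgT, hgU⟩ := Set.mem_iUnion₂.mp (hT hh)
    refine Set.mem_iUnion₂.mpr ⟨g, ?_, hgU⟩
    rw [hT', Finset.mem_filter]
    exact ⟨hgT, lt_of_le_of_lt (norm_nonneg _) hgU.1⟩
  set C : G → Set G := fun g =>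
    (K ∩ {h | ‖(χ : G →+ 𝕋) h - (χ : G →+ 𝕋) g‖ ≤ δ g}) ∩
      {h | ‖(χ₀ : G →+ 𝕋) h - (χ₀ : G →+ 𝕋) g‖ ≤ δ g} with hC
  have hCcomp : ∀ g, IsCompact (C g) := by
    intro g
    refine IsCompact.inter_right ?_ ?_
    · exact hK.inter_right (isClosed_le ((hχc.sub continuous_const).norm) continuous_const)
    · exact isClosed_le ((hχ₀c.sub continuous_const).norm) continuous_const
  set W : G → Set ↥(dual τ) := fun g =>
    {ψ : ↥(dual τ) | ∀ h ∈ C g, (ψ : G →+ 𝕋) h ∈ Metric.ball ((χ : G →+ 𝕋) g) (2 * δ g)}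
    with hW
  have hWopen : ∀ g, IsOpen[coTop τ] (W g) := by
    intro g
    exact TopologicalSpace.isOpen_generateFrom_of_mem
      ⟨C g, Metric.ball ((χ : G →+ 𝕋) g) (2 * δ g), hCcomp g, Metric.isOpen_ball, rfl⟩
  refine ⟨⋂ g ∈ T', W g, ?_, ?_, ?_⟩
  · -- the intersection is contained in V
    intro ψ hψ
    simp only [Set.mem_iInter] at hψ
    intro h hh
    obtain ⟨g, hgT, hgU⟩ := Set.mem_iUnion₂.mp (hcover' hh)
    have hδg : 0 < δ g := (Finset.mem_filter.mp hgT).2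
    have hCg : h ∈ C g := by
      refine ⟨⟨hh, le_of_lt hgU.1⟩, le_of_lt hgU.2⟩
    have hball := hψ g hgT h hCg
    rw [Metric.mem_ball, dist_eq_norm] at hball
    have h4 : ‖(χ : G →+ 𝕋) g - (χ₀ : G →+ 𝕋) g‖ = ε - 4 * δ g := by
      simp only [hδ]; ring
    calc ‖(ψ : G →+ 𝕋) h - (χ₀ : G →+ 𝕋) h‖
        = ‖((ψ : G →+ 𝕋) h - (χ : G →+ 𝕋) g) + ((χ : G →+ 𝕋) g - (χ₀ : G →+ 𝕋) g)
            + ((χ₀ : G →+ 𝕋) g - (χ₀ : G →+ 𝕋) h)‖ := by congr 1; abel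
      _ ≤ ‖((ψ : G →+ 𝕋) h - (χ : G →+ 𝕋) g) + ((χ : G →+ 𝕋) g - (χ₀ : G →+ 𝕋) g)‖
            + ‖(χ₀ : G →+ 𝕋) g - (χ₀ : G →+ 𝕋) h‖ := norm_add_le _ _
      _ ≤ ‖(ψ : G →+ 𝕋) h - (χ : G →+ 𝕋) g‖ + ‖(χ : G →+ 𝕋) g - (χ₀ : G →+ 𝕋) g‖
            + ‖(χ₀ : G →+ 𝕋) g - (χ₀ : G →+ 𝕋) h‖ := by
          have := norm_add_le ((ψ : G →+ 𝕋) h - (χ : G →+ 𝕋) g)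
            ((χ : G →+ 𝕋) g - (χ₀ : G →+ 𝕋) g)
          linarith
      _ < 2 * δ g + (ε - 4 * δ g) + δ g := by
          rw [← h4]
          refine add_lt_add (add_lt_add_of_lt_of_le hball (le_refl _)) ?_
          rw [norm_sub_rev]
          exact hgU.2
      _ < ε := by linarith
  · exact @Set.Finite.isOpen_biInter _ _ (coTop τ) _ _ (T'.finite_toSet) (fun g hg => hWopen g)
  · -- χ belongs to the intersection
    simp only [Set.mem_iInter]
    intro g hgT h hCg
    have hδg : 0 < δ g := (Finset.mem_filter.mp hgT).2
    rw [Metric.mem_ball, dist_eq_norm]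
    calc ‖(χ : G →+ 𝕋) h - (χ : G →+ 𝕋) g‖ ≤ δ g := hCg.1.2
      _ < 2 * δ g := by linarith

lemma coTop_eq_bot_of_countable [Countable G]
    (τ : TopologicalSpace G) (u : ℕ → G) (hu : TendsToZero τ u)
    (hc : (sS {u}).Countable) : coTop τ = ⊥ := by
  classical
  by_cases hC : ∀ K : Set G, @IsCompact G τ K → ∀ n : ℕ, ∃ ψ : G →+ 𝕋,
      ψ ∈ sS {u} ∧ ψ ≠ 0 ∧ ∀ g ∈ K, ‖ψ g‖ ≤ (1/2 : ℝ)^(n+4)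
  · exact absurd hc (uncountable_sS_of_small_chars τ u hu hC)
  push_neg at hC
  obtain ⟨K, hK, n, hKn⟩ := hC
  set ε : ℝ := (1/2 : ℝ)^(n+4) with hε
  have hεpos : 0 < ε := by positivity
  refine @eq_bot_of_singletons_open _ (coTop τ) ?_
  intro χ₀
  have hopen := twisted_isOpen τ hK χ₀ hεpos
  have heq : {χ : ↥(dual τ) | ∀ g ∈ K, ‖(χ : G →+ 𝕋) g - (χ₀ : G →+ 𝕋) g‖ < ε} = {χ₀} := by
    ext χ
    simp only [Set.mem_setOf_eq, Set.mem_singleton_iff]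
    constructor
    · intro hsmall
      have hmem : ((χ : G →+ 𝕋) - (χ₀ : G →+ 𝕋)) ∈ sS {u} := by
        have : (χ - χ₀ : ↥(dual τ)) = ⟨(χ : G →+ 𝕋) - (χ₀ : G →+ 𝕋), (dual τ).sub_mem χ.2 χ₀.2⟩ := rfl
        exact dual_subset_sS hu ((dual τ).sub_mem χ.2 χ₀.2)
      by_contra hne
      have hne' : (χ : G →+ 𝕋) - (χ₀ : G →+ 𝕋) ≠ 0 := by
        intro h
        apply hne
        apply Subtype.ext
        exact sub_eq_zero.mp h
      obtain ⟨g, hgK, hgbig⟩ := hKn _ hmem hne'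
      have := hsmall g hgK
      simp only [AddMonoidHom.sub_apply] at hgbig
      rw [hε] at this
      linarith
    · intro h
      subst h
      intro g _
      simpa using hεpos
  rw [← heq]
  exact hopen

end Discrete

section DualEquality

variable {G : Type*} [AddCommGroup G]

lemma exists_sub_nhds (τ : TopologicalSpace G) (hg : @IsTopologicalAddGroup G τ _)
    {U : Set G} (hU : U ∈ @nhds G τ 0) :
    ∃ W ∈ @nhds G τ 0, ∀ a ∈ W, ∀ b ∈ W, a - b ∈ U := by
  letI := τ
  haveI := hg
  have hsub : Filter.Tendsto (fun p : G × G => p.1 - p.2) (nhds (0, 0)) (nhds 0) := by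
    have := (continuous_sub : Continuous fun p : G × G => p.1 - p.2).tendsto ((0 : G), (0 : G))
    simpa using this
  rw [nhds_prod_eq] at hsub
  have hmem := hsub hU
  rw [Filter.mem_map, Filter.mem_prod_iff] at hmem
  obtain ⟨W₁, hW₁, W₂, hW₂, hsubset⟩ := hmem
  refine ⟨W₁ ∩ W₂, Filter.inter_mem hW₁ hW₂, fun a ha b hb => ?_⟩
  exact hsubset (Set.mk_mem_prod ha.1 hb.2)

lemma precompact_induced (χ : G →+ 𝕋) :
    IsPrecompactTop (TopologicalSpace.induced (χ : G → 𝕋) inferInstance) := by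
  classical
  intro U hU
  rw [@nhds_induced 𝕋 G _ (χ : G → 𝕋) 0, map_zero, Filter.mem_comap] at hU
  obtain ⟨V, hV, hVU⟩ := hU
  obtain ⟨r, hr, hball⟩ := Metric.mem_nhds_iff.mp hV
  obtain ⟨t, htfin, htcov⟩ := Metric.totallyBounded_iff.mp
    ((isCompact_univ : IsCompact (Set.univ : Set 𝕋)).totallyBounded) (r/2) (by linarith)
  set pg : 𝕋 → G := fun y => if h : ∃ g : G, χ g ∈ Metric.ball y (r/2) then h.choose else 0
    with hpg
  refine ⟨htfin.toFinset.image pg, fun g => ?_⟩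
  have hgmem : χ g ∈ ⋃ y ∈ t, Metric.ball y (r/2) := htcov (Set.mem_univ _)
  obtain ⟨y, hyt, hy⟩ := Set.mem_iUnion₂.mp hgmem
  have hex : ∃ g' : G, χ g' ∈ Metric.ball y (r/2) := ⟨g, hy⟩
  refine ⟨pg y, Finset.mem_image_of_mem _ (htfin.mem_toFinset.mpr hyt), ?_⟩
  apply hVU
  have hpgy : χ (pg y) ∈ Metric.ball y (r/2) := by
    rw [hpg]; simp only [dif_pos hex]; exact hex.choose_spec
  apply hball
  rw [Metric.mem_ball, map_sub, dist_zero_right]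
  calc ‖χ g - χ (pg y)‖ ≤ dist (χ g) y + dist y (χ (pg y)) := by
        rw [← dist_eq_norm]; exact dist_triangle _ _ _
    _ < r/2 + r/2 := add_lt_add (Metric.mem_ball.mp hy) (by rw [dist_comm]; exact hpgy)
    _ = r := by ring

lemma precompact_inf {τ₁ τ₂ : TopologicalSpace G}
    (hg₁ : @IsTopologicalAddGroup G τ₁ _) (hg₂ : @IsTopologicalAddGroup G τ₂ _)
    (hp₁ : IsPrecompactTop τ₁) (hp₂ : IsPrecompactTop τ₂) :
    IsPrecompactTop (τ₁ ⊓ τ₂) := by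
  classical
  intro U hU
  rw [@nhds_inf G τ₁ τ₂ 0, Filter.mem_inf_iff] at hU
  obtain ⟨U₁, hU₁, U₂, hU₂, rfl⟩ := hU
  obtain ⟨W₁, hW₁, hW₁sub⟩ := exists_sub_nhds τ₁ hg₁ hU₁
  obtain ⟨W₂, hW₂, hW₂sub⟩ := exists_sub_nhds τ₂ hg₂ hU₂
  obtain ⟨F₁, hF₁⟩ := hp₁ W₁ hW₁
  obtain ⟨F₂, hF₂⟩ := hp₂ W₂ hW₂
  set pt : G × G → G := fun p =>
    if h : ∃ g : G, g - p.1 ∈ W₁ ∧ g - p.2 ∈ W₂ then h.choose else 0 with hpt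
  refine ⟨(F₁ ×ˢ F₂).image pt, fun g => ?_⟩
  obtain ⟨f₁, hf₁, hgf₁⟩ := hF₁ g
  obtain ⟨f₂, hf₂, hgf₂⟩ := hF₂ g
  have hex : ∃ g' : G, g' - f₁ ∈ W₁ ∧ g' - f₂ ∈ W₂ := ⟨g, hgf₁, hgf₂⟩
  refine ⟨pt (f₁, f₂), Finset.mem_image_of_mem _ (Finset.mem_product.mpr ⟨hf₁, hf₂⟩), ?_⟩
  have hptspec : pt (f₁, f₂) - f₁ ∈ W₁ ∧ pt (f₁, f₂) - f₂ ∈ W₂ := by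
    rw [hpt]; simp only [dif_pos hex]; exact hex.choose_spec
  constructor
  · have := hW₁sub _ hgf₁ _ hptspec.1
    simpa using this
  · have := hW₂sub _ hgf₂ _ hptspec.2
    simpa using this

lemma sS_subset_dual_bu {u : ℕ → G} {τbu : TopologicalSpace G}
    (hbu : IsFinestPFor {u} τbu) {χ : G →+ 𝕋} (hχ : χ ∈ sS {u}) : χ ∈ dual τbu := by
  set τχ : TopologicalSpace G := TopologicalSpace.induced (χ : G → 𝕋) inferInstance with hτχ
  have hgχ : @IsTopologicalAddGroup G τχ _ := topologicalAddGroup_induced χ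
  have hgbu : @IsTopologicalAddGroup G τbu _ := hbu.1.1.1
  set τ' : TopologicalSpace G := τbu ⊓ τχ with hτ'
  have hg' : @IsTopologicalAddGroup G τ' _ := @topologicalAddGroup_inf G _ τbu τχ hgbu hgχ
  have hT2 : @T2Space G τ' := t2Space_antitone (inf_le_left (b := τχ)) hbu.1.1.2.1
  have htend : TendsToZero τ' u := by
    unfold TendsToZero
    rw [hτ', @nhds_inf G τbu τχ 0, Filter.tendsto_inf]
    constructor
    · exact hbu.1.1.2.2 u rfl
    · rw [hτχ, @nhds_induced 𝕋 G _ (χ : G → 𝕋) 0, map_zero, Filter.tendsto_comap_iff]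
      exact mem_sS_iff.mp hχ
  have hprec : IsPrecompactTop τ' :=
    precompact_inf hgbu hgχ hbu.1.2 (precompact_induced χ)
  have hle : τbu ≤ τ' := hbu.2 τ' ⟨⟨hg', hT2, fun v hv => by rw [Set.mem_singleton_iff] at hv; subst hv; exact htend⟩, hprec⟩
  have hle2 : τbu ≤ τχ := le_trans hle inf_le_right
  show @Continuous G 𝕋 τbu _ χ
  rw [continuous_iff_le_induced]
  exact hle2

end DualEquality


/-- Corollary 2.6: Let `G` be a countably infinite Abelian group and `u` a
`TB`-sequence in `G` with `s_u(G_d^∧)` countable. Then the conjugate of the identity map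
`j : (G, u) → (G, bu)` is a topological isomorphism `j^∧ : (G, bu)^∧ → (G, u)^∧`; in
particular, both dual groups are discrete and coincide. -/
theorem statement_17 {G : Type*} [AddCommGroup G] [Countable G] [Infinite G] (u : ℕ → G)
    (hTB : IsTBSSet {u}) (τu τbu : TopologicalSpace G)
    (hu : IsFinestFor {u} τu) (hbu : IsFinestPFor {u} τbu)
    (hc : (sS {u}).Countable) :
    (∃ e : ↥(dual τbu) ≃+ ↥(dual τu),
      (∀ χ : ↥(dual τbu), ((e χ : G →+ 𝕋)) = ((χ : G →+ 𝕋))) ∧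
      @Continuous _ _ (coTop τbu) (coTop τu) ⇑e ∧
      @Continuous _ _ (coTop τu) (coTop τbu) ⇑e.symm) ∧
    coTop τu = ⊥ ∧ coTop τbu = ⊥ ∧
    (dual τbu : Set (G →+ 𝕋)) = (dual τu : Set (G →+ 𝕋)) := by
  have hle : τu ≤ τbu := hu.2 τbu hbu.1.1
  have huz : TendsToZero τu u := hu.1.2.2 u rfl
  have hbuz : TendsToZero τbu u := hbu.1.1.2.2 u rfl
  have hsets : (dual τbu : Set (G →+ 𝕋)) = (dual τu : Set (G →+ 𝕋)) := by
    apply Set.Subset.antisymm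
    · intro χ hχ
      show @Continuous G 𝕋 τu _ χ
      have h2 : @Continuous G 𝕋 τbu _ χ := hχ
      rw [continuous_iff_le_induced] at h2 ⊢
      exact le_trans hle h2
    · intro χ hχ
      exact sS_subset_dual_bu hbu (dual_subset_sS huz hχ)
  have hduals : dual τbu = dual τu := SetLike.ext' hsets
  have hbot_u : coTop τu = ⊥ := coTop_eq_bot_of_countable τu u huz hc
  have hbot_bu : coTop τbu = ⊥ := coTop_eq_bot_of_countable τbu u hbuz hc
  refine ⟨?_, hbot_u, hbot_bu, hsets⟩
  refine ⟨{ toFun := fun χ => ⟨χ.1, hduals ▸ χ.2⟩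
            invFun := fun χ => ⟨χ.1, hduals.symm ▸ χ.2⟩
            left_inv := fun χ => rfl
            right_inv := fun χ => rfl
            map_add' := fun a b => rfl }, fun χ => rfl, ?_, ?_⟩
  · rw [hbot_bu]; exact continuous_bot
  · rw [hbot_u]; exact continuous_bot
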